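/- Suppose a real number ξ admits sequences (Y_k) of positive integers and (y_k) in ℤ³ with ‖y_k‖ ≍ Y_k, L(y_k) ≤ C·Y_k^{-1} for all k, Y_k → ∞, and 1 ≤ |det(y_k, y_{k+1}, y_{k+2})| for all k. Then ξ is neither rational nor a quadratic irrational, i.e., 1, ξ, ξ² are linearly independent over ℚ. -/

import Mathlib

noncomputable def normT (x : Fin 3 → ℤ) : ℝ :=
  max (|(x 0 : ℝ)|) (max (|(x 1 : ℝ)|) (|(x 2 : ℝ)|))

noncomputable def Lf (ξ : ℝ) (x : Fin 3 → ℤ) : ℝ :=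
  max (|(x 0 : ℝ) * ξ - (x 1 : ℝ)|) (|(x 0 : ℝ) * ξ ^ 2 - (x 2 : ℝ)|)

def det3 (x y z : Fin 3 → ℤ) : ℤ :=
  (!![x 0, x 1, x 2; y 0, y 1, y 2; z 0, z 1, z 2]).det

/-
An integer relation `v₀ + v₁ ξ + v₂ ξ² = 0` rewrites the linear form `v ⬝ᵥ x` as
`-v₁ (x₀ ξ - x₁) - v₂ (x₀ ξ² - x₂)`, an integer of absolute value `≪ L(x)`. Since
`L(y_k) ≤ C / Y_k → 0`, it vanishes at `y_k` for all large `k`, so three consecutive `y_k` lie in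
the plane `v ⬝ᵥ x = 0` and their determinant is zero.
-/

open Filter Topology Matrix

lemma exists_int_relation_of_rat_relation {ξ : ℝ} {p q r : ℚ}
    (hpqr : ¬(p = 0 ∧ q = 0 ∧ r = 0)) (h : (p : ℝ) + q * ξ + r * ξ ^ 2 = 0) :
    ∃ v : Fin 3 → ℤ, v ≠ 0 ∧ (v 0 : ℝ) + v 1 * ξ + v 2 * ξ ^ 2 = 0 := by
  have hnum (s : ℚ) : (s.num : ℝ) = s * s.den := by exact_mod_cast (Rat.mul_den_eq_num s).symm
  refine ⟨![p.num * q.den * r.den, p.den * q.num * r.den, p.den * q.den * r.num], ?_, ?_⟩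
  · intro hv
    apply hpqr
    have h0 := congrFun hv 0
    have h1 := congrFun hv 1
    have h2 := congrFun hv 2
    simp_all
  · simp only [cons_val_zero, cons_val_one, cons_val_two, head_cons, tail_cons]
    push_cast [hnum]
    linear_combination ((p.den : ℝ) * q.den * r.den) * h

lemma Lf_nonneg (ξ : ℝ) (x : Fin 3 → ℤ) : 0 ≤ Lf ξ x :=
  (abs_nonneg _).trans (le_max_left _ _)

lemma abs_dotProduct_le_mul_Lf {ξ : ℝ} {v : Fin 3 → ℤ}
    (hv : (v 0 : ℝ) + v 1 * ξ + v 2 * ξ ^ 2 = 0) (x : Fin 3 → ℤ) :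
    |((v ⬝ᵥ x : ℤ) : ℝ)| ≤ (|(v 1 : ℝ)| + |(v 2 : ℝ)|) * Lf ξ x := by
  have hexpand : ((v ⬝ᵥ x : ℤ) : ℝ)
      = x 0 * ((v 0 : ℝ) + v 1 * ξ + v 2 * ξ ^ 2)
        - v 1 * (x 0 * ξ - x 1) - v 2 * (x 0 * ξ ^ 2 - x 2) := by
    simp only [dotProduct, Fin.sum_univ_three]
    push_cast
    ring
  rw [hexpand, hv, mul_zero, zero_sub, add_mul]
  calc _ ≤ |(v 1 : ℝ) * (x 0 * ξ - x 1)| + |(v 2 : ℝ) * (x 0 * ξ ^ 2 - x 2)| := by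
        rw [← abs_neg (_ * _)]; exact abs_sub _ _
    _ ≤ _ := by
      rw [abs_mul, abs_mul]
      gcongr
      exacts [le_max_left _ _, le_max_right _ _]

lemma dotProduct_eq_zero_of_mul_Lf_lt_one {ξ : ℝ} {v : Fin 3 → ℤ}
    (hv : (v 0 : ℝ) + v 1 * ξ + v 2 * ξ ^ 2 = 0) {x : Fin 3 → ℤ}
    (hx : (|(v 1 : ℝ)| + |(v 2 : ℝ)|) * Lf ξ x < 1) : v ⬝ᵥ x = 0 := by
  have : |v ⬝ᵥ x| < 1 := by
    exact_mod_cast (abs_dotProduct_le_mul_Lf hv x).trans_lt hx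
  exact Int.abs_lt_one_iff.1 this

lemma det3_eq_zero_of_dotProduct_eq_zero {v x y z : Fin 3 → ℤ} (hv : v ≠ 0)
    (hx : v ⬝ᵥ x = 0) (hy : v ⬝ᵥ y = 0) (hz : v ⬝ᵥ z = 0) : det3 x y z = 0 := by
  have hrows : !![x 0, x 1, x 2; y 0, y 1, y 2; z 0, z 1, z 2] = Matrix.of ![x, y, z] := by
    ext i j; fin_cases i <;> fin_cases j <;> rfl
  rw [det3, hrows, ← exists_mulVec_eq_zero_iff]
  refine ⟨v, hv, ?_⟩
  ext i
  fin_cases i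
  exacts [(dotProduct_comm x v).trans hx, (dotProduct_comm y v).trans hy,
    (dotProduct_comm z v).trans hz]

lemma tendsto_Lf_zero {ξ C : ℝ} {Y : ℕ → ℕ} {y : ℕ → Fin 3 → ℤ}
    (hL : ∀ k, Lf ξ (y k) ≤ C / (Y k : ℝ)) (hYtop : Tendsto Y atTop atTop) :
    Tendsto (fun k => Lf ξ (y k)) atTop (𝓝 0) :=
  tendsto_of_tendsto_of_tendsto_of_le_of_le tendsto_const_nhds
    (tendsto_const_nhds.div_atTop (tendsto_natCast_atTop_atTop.comp hYtop))
    (fun k => Lf_nonneg ξ (y k)) hL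

theorem not_quadratic_of_good_sequence_general (ξ : ℝ)
    (Y : ℕ → ℕ)
    (y : ℕ → Fin 3 → ℤ)
    (C : ℝ)
    (hL : ∀ k, Lf ξ (y k) ≤ C / (Y k : ℝ))
    (hYtop : Filter.Tendsto Y Filter.atTop Filter.atTop)
    (hdet : ∀ k, 1 ≤ |det3 (y k) (y (k + 1)) (y (k + 2))|) :
    ∀ p q r : ℚ, (p : ℝ) + q * ξ + r * ξ ^ 2 = 0 → p = 0 ∧ q = 0 ∧ r = 0 := by
  intro p q r hrel
  by_contra hpqr
  obtain ⟨v, hv0, hv⟩ := exists_int_relation_of_rat_relation hpqr hrel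
  have hsmall : ∀ᶠ k in atTop, (|(v 1 : ℝ)| + |(v 2 : ℝ)|) * Lf ξ (y k) < 1 := by
    have := (tendsto_Lf_zero hL hYtop).const_mul (|(v 1 : ℝ)| + |(v 2 : ℝ)|)
    rw [mul_zero] at this
    exact this.eventually (gt_mem_nhds one_pos)
  obtain ⟨K, hK⟩ := hsmall.exists_forall_of_atTop
  have hzero (k : ℕ) (hk : K ≤ k) : v ⬝ᵥ y k = 0 :=
    dotProduct_eq_zero_of_mul_Lf_lt_one hv (hK k hk)
  have hdet0 : det3 (y K) (y (K + 1)) (y (K + 2)) = 0 :=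
    det3_eq_zero_of_dotProduct_eq_zero hv0 (hzero K le_rfl) (hzero (K + 1) (by omega))
      (hzero (K + 2) (by omega))
  simpa [hdet0] using hdet K

theorem not_quadratic_of_good_sequence (ξ : ℝ)
    (Y : ℕ → ℕ) (hY1 : ∀ k, 1 ≤ Y k)
    (y : ℕ → Fin 3 → ℤ)
    (c₁ c₂ C : ℝ) (hc₁ : 0 < c₁) (hc₂ : 0 < c₂) (hC : 0 < C)
    (hnorm : ∀ k, c₁ * (Y k : ℝ) ≤ normT (y k) ∧ normT (y k) ≤ c₂ * (Y k : ℝ))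
    (hL : ∀ k, Lf ξ (y k) ≤ C / (Y k : ℝ))
    (hYtop : Filter.Tendsto Y Filter.atTop Filter.atTop)
    (hdet : ∀ k, 1 ≤ |det3 (y k) (y (k + 1)) (y (k + 2))|) :
    ∀ p q r : ℚ, (p : ℝ) + q * ξ + r * ξ ^ 2 = 0 → p = 0 ∧ q = 0 ∧ r = 0 :=
  not_quadratic_of_good_sequence_general ξ Y y C hL hYtop hdet
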